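/- arXiv:1907.10318 — 6 statements merged into one kernel-verified Lean document; each statement's English description precedes it below -/
import Mathlib

section
/- Let (X, ν) be a general state space with a sigma-finite reference measure ν, let μ be a strictly positive probability density with respect to ν, and let Q(x,y) ≥ 0 be a measurable jump rate kernel with sup_x ∫_{y ≠ x} Q(x,y) ν(dy) < ∞. For measurable kernels Q1, Q2 define d_μ(Q1,Q2) := ∫∫_{{(x,y): x ≠ y}} μ(x)|Q1(x,y) − Q2(x,y)| ν(dx)ν(dy). Then for every measurable kernel R(x,y) ≥ 0 that is μ-reversible, i.e. μ(x)R(x,y) = μ(y)R(y,x) for ν⊗ν-almost every (x,y), one has d_μ(Q,R) ≥ d_μ(Q,M2), where M2(x,y) := max{Q(x,y), (μ(y)/μ(x))Q(y,x)}. -/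
/-!
Write `a = μ(x)Q(x,y)`, `b = μ(y)Q(y,x)` for the two fluxes across the pair `{x, y}`. Reversibility
makes `R` carry a single flux `r = μ(x)R(x,y) = μ(y)R(y,x)`, and the pair contributes
`|a - r| + |b - r| ≥ |a - b|` to `d_μ(Q, R)`, whereas `M2` carries the flux `max a b` and the
pair contributes exactly `|a - b|` to `d_μ(Q, M2)`. Integrating over the off-diagonal, which is
invariant under `(x, y) ↦ (y, x)`, turns this pairwise comparison into the inequality.
-/

open MeasureTheory ENNReal

lemma abs_sub_max_add_abs_sub_max_le {α : Type*} [AddCommGroup α] [LinearOrder α]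
    [IsOrderedAddMonoid α] (a b r : α) :
    |a - max a b| + |b - max b a| ≤ |a - r| + |b - r| := by
  have h : |a - max a b| + |b - max b a| = |a - b| := by
    rcases le_total a b with hab | hab
    · simp [max_eq_right hab, max_eq_left hab, abs_sub_comm a b]
    · simp [max_eq_left hab, max_eq_right hab, abs_sub_comm b a]
  rw [h, abs_sub_comm b r]
  exact abs_sub_le a r b

lemma mul_abs_sub_max_div_mul {c d q q' : ℝ} (hc : 0 < c) :
    c * |q - max q (d / c * q')| = |c * q - max (c * q) (d * q')| := by
  rw [← abs_of_pos hc, ← abs_mul, abs_of_pos hc, mul_sub, mul_max_of_nonneg _ _ hc.le,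
    ← mul_assoc, mul_div_cancel₀ d hc.ne']

lemma lintegral_le_of_ae_add_comp_le {α : Type*} [MeasurableSpace α] {ρ : Measure α}
    {e : α → α} (he : MeasurePreserving e ρ ρ) {f g : α → ℝ≥0∞} (hf : Measurable f)
    (hg : Measurable g) (hfg : ∀ᵐ p ∂ρ, f p + f (e p) ≤ g p + g (e p)) :
    ∫⁻ p, f p ∂ρ ≤ ∫⁻ p, g p ∂ρ := by
  have key : 2 * ∫⁻ p, f p ∂ρ ≤ 2 * ∫⁻ p, g p ∂ρ :=
    calc 2 * ∫⁻ p, f p ∂ρ = ∫⁻ p, f p + f (e p) ∂ρ := by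
          rw [lintegral_add_left hf, he.lintegral_comp hf, two_mul]
      _ ≤ ∫⁻ p, g p + g (e p) ∂ρ := lintegral_mono_ae hfg
      _ = 2 * ∫⁻ p, g p ∂ρ := by
          rw [lintegral_add_left hg, he.lintegral_comp hg, two_mul]
  exact (ENNReal.mul_le_mul_iff_right two_ne_zero ofNat_ne_top).mp key

lemma measurePreserving_swap_restrict_offDiag {X : Type*} [MeasurableSpace X] (ν : Measure X)
    [SFinite ν] :
    MeasurePreserving Prod.swap ((ν.prod ν).restrict {p : X × X | p.1 ≠ p.2})
      ((ν.prod ν).restrict {p : X × X | p.1 ≠ p.2}) := by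
  have h := (Measure.measurePreserving_swap (μ := ν) (ν := ν)).restrict_preimage_emb
    MeasurableEquiv.prodComm.measurableEmbedding {p : X × X | p.1 ≠ p.2}
  have hS : Prod.swap ⁻¹' {p : X × X | p.1 ≠ p.2} = {p | p.1 ≠ p.2} := by
    ext p
    simp [ne_comm]
  rwa [hS] at h

lemma ofReal_dist_M2_add_swap_le {X : Type*} {μ : X → ℝ} {Q R : X → X → ℝ} {x y : X}
    (hx : 0 < μ x) (hy : 0 < μ y) (hrev : μ x * R x y = μ y * R y x) :
    ENNReal.ofReal (μ x * |Q x y - max (Q x y) (μ y / μ x * Q y x)|)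
        + ENNReal.ofReal (μ y * |Q y x - max (Q y x) (μ x / μ y * Q x y)|)
      ≤ ENNReal.ofReal (μ x * |Q x y - R x y|) + ENNReal.ofReal (μ y * |Q y x - R y x|) := by
  have hxR : μ x * |Q x y - R x y| = |μ x * Q x y - μ x * R x y| := by
    rw [← abs_of_pos hx, ← abs_mul, abs_of_pos hx, mul_sub]
  have hyR : μ y * |Q y x - R y x| = |μ y * Q y x - μ x * R x y| := by
    rw [← abs_of_pos hy, ← abs_mul, abs_of_pos hy, mul_sub, hrev]
  rw [mul_abs_sub_max_div_mul hx, mul_abs_sub_max_div_mul hy, hxR, hyR,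
    ← ofReal_add (by positivity) (by positivity), ← ofReal_add (by positivity) (by positivity)]
  exact ofReal_le_ofReal (abs_sub_max_add_abs_sub_max_le _ _ _)

theorem mh_M2_minimizes_L1_general {X : Type*} [MeasurableSpace X] (ν : Measure X) [SigmaFinite ν]
    (μ : X → ℝ) (hμpos : ∀ x, 0 < μ x) (hμmeas : Measurable μ)
    (Q : X → X → ℝ) (hQmeas : Measurable fun p : X × X => Q p.1 p.2)
    (R : X → X → ℝ) (hRmeas : Measurable fun p : X × X => R p.1 p.2)
    (hRrev : ∀ᵐ p ∂(ν.prod ν), μ p.1 * R p.1 p.2 = μ p.2 * R p.2 p.1) :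
    ∫⁻ p in {p : X × X | p.1 ≠ p.2},
        ENNReal.ofReal (μ p.1 * |Q p.1 p.2 - max (Q p.1 p.2) (μ p.2 / μ p.1 * Q p.2 p.1)|)
        ∂(ν.prod ν)
      ≤ ∫⁻ p in {p : X × X | p.1 ≠ p.2},
          ENNReal.ofReal (μ p.1 * |Q p.1 p.2 - R p.1 p.2|) ∂(ν.prod ν) := by
  have hμ₁ : Measurable fun p : X × X => μ p.1 := hμmeas.comp measurable_fst
  have hμ₂ : Measurable fun p : X × X => μ p.2 := hμmeas.comp measurable_snd
  have hQswap : Measurable fun p : X × X => Q p.2 p.1 := hQmeas.comp measurable_swap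
  refine lintegral_le_of_ae_add_comp_le (measurePreserving_swap_restrict_offDiag ν)
    (ENNReal.measurable_ofReal.comp
      (hμ₁.mul (hQmeas.sub (hQmeas.max ((hμ₂.div hμ₁).mul hQswap))).abs))
    (ENNReal.measurable_ofReal.comp (hμ₁.mul (hQmeas.sub hRmeas).abs)) ?_
  filter_upwards [ae_restrict_of_ae hRrev] with ⟨x, y⟩ hrev
  exact ofReal_dist_M2_add_swap_le (hμpos x) (hμpos y) hrev

/-- The second Metropolis-Hastings kernel `M2(x,y) = max{Q(x,y), (μ(y)/μ(x))Q(y,x)}` minimizes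
the `L¹` distance `d_μ` from `Q` among all `μ`-reversible nonnegative kernels `R`:
`d_μ(Q, R) ≥ d_μ(Q, M2)`. -/
theorem mh_M2_minimizes_L1 {X : Type*} [MeasurableSpace X] (ν : Measure X) [SigmaFinite ν]
    (μ : X → ℝ) (hμpos : ∀ x, 0 < μ x) (hμmeas : Measurable μ)
    (hμprob : ∫⁻ x, ENNReal.ofReal (μ x) ∂ν = 1)
    (Q : X → X → ℝ) (hQmeas : Measurable fun p : X × X => Q p.1 p.2)
    (hQnonneg : ∀ x y, 0 ≤ Q x y)
    (hQbdd : ∃ C : ℝ, ∀ x, ∫⁻ y in {y | y ≠ x}, ENNReal.ofReal (Q x y) ∂ν ≤ ENNReal.ofReal C)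
    (R : X → X → ℝ) (hRmeas : Measurable fun p : X × X => R p.1 p.2)
    (hRnonneg : ∀ x y, 0 ≤ R x y)
    (hRrev : ∀ᵐ p ∂(ν.prod ν), μ p.1 * R p.1 p.2 = μ p.2 * R p.2 p.1) :
    ∫⁻ p in {p : X × X | p.1 ≠ p.2},
        ENNReal.ofReal (μ p.1 * |Q p.1 p.2 - max (Q p.1 p.2) (μ p.2 / μ p.1 * Q p.2 p.1)|)
        ∂(ν.prod ν)
      ≤ ∫⁻ p in {p : X × X | p.1 ≠ p.2},
          ENNReal.ofReal (μ p.1 * |Q p.1 p.2 - R p.1 p.2|) ∂(ν.prod ν) :=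
  mh_M2_minimizes_L1_general ν μ hμpos hμmeas Q hQmeas R hRmeas hRrev
end

section
/- Let (X, ν) be a general state space with a sigma-finite reference measure ν, let μ be a strictly positive probability density with respect to ν, and let Q(x,y) ≥ 0 be a measurable jump rate kernel with sup_x ∫_{y ≠ x} Q(x,y) ν(dy) < ∞. For measurable kernels Q1, Q2 define d_μ(Q1,Q2) := ∫∫_{{(x,y): x ≠ y}} μ(x)|Q1(x,y) − Q2(x,y)| ν(dx)ν(dy). Then for every measurable kernel R(x,y) ≥ 0 that is μ-reversible, i.e. μ(x)R(x,y) = μ(y)R(y,x) for ν⊗ν-almost every (x,y), one has d_μ(Q,R) ≥ d_μ(Q,M1), where M1(x,y) := min{Q(x,y), (μ(y)/μ(x))Q(y,x)}. -/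
open MeasureTheory
open scoped ENNReal

/-- Pointwise real inequality: the symmetrized `L¹` defect of the `M1` kernel is at most
that of any reversible kernel. -/
lemma mh_real_key (p q u v s t : ℝ) (hp : 0 < p) (hq : 0 < q) (hrev : p * s = q * t) :
    p * |u - min u (q / p * v)| + q * |v - min v (p / q * u)| ≤
      p * |u - s| + q * |v - t| := by
  have habs : ∀ c w : ℝ, 0 < c → c * |w| = |c * w| := fun c w hc => by
    rw [abs_mul, abs_of_pos hc]
  have hpv : p * (q / p * v) = q * v := by field_simp
  have hqu : q * (p / q * u) = p * u := by field_simp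
  have h1 : p * |u - min u (q / p * v)| = |p * u - min (p * u) (q * v)| := by
    rw [habs _ _ hp]
    congr 1
    rcases le_total u (q / p * v) with h | h
    · have h' : p * u ≤ q * v := by
        have := mul_le_mul_of_nonneg_left h hp.le
        linarith [hpv]
      rw [min_eq_left h, min_eq_left h']
      ring
    · have h' : q * v ≤ p * u := by
        have := mul_le_mul_of_nonneg_left h hp.le
        linarith [hpv]
      rw [min_eq_right h, min_eq_right h']
      linarith [hpv]
  have h2 : q * |v - min v (p / q * u)| = |q * v - min (p * u) (q * v)| := by
    rw [habs _ _ hq]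
    congr 1
    rcases le_total v (p / q * u) with h | h
    · have h' : q * v ≤ p * u := by
        have := mul_le_mul_of_nonneg_left h hq.le
        linarith [hqu]
      rw [min_eq_left h, min_eq_right h']
      ring
    · have h' : p * u ≤ q * v := by
        have := mul_le_mul_of_nonneg_left h hq.le
        linarith [hqu]
      rw [min_eq_right h, min_eq_left h']
      linarith [hqu]
  have h3 : p * |u - s| = |p * u - p * s| := by
    rw [habs _ _ hp]; congr 1; ring
  have h4 : q * |v - t| = |q * v - p * s| := by
    rw [habs _ _ hq, hrev]; congr 1; ring
  rw [h1, h2, h3, h4]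
  set a := p * u
  set b := q * v
  set r := p * s
  have hL : |a - min a b| + |b - min a b| = |a - b| := by
    rcases le_total a b with h | h
    · rw [min_eq_left h, sub_self, abs_zero, zero_add, abs_sub_comm]
    · rw [min_eq_right h, sub_self, abs_zero, add_zero]
  rw [hL]
  calc |a - b| ≤ |a - r| + |r - b| := abs_sub_le a r b
    _ = |a - r| + |b - r| := by rw [abs_sub_comm r b]

/-- The first Metropolis-Hastings kernel `M1(x,y) = min{Q(x,y), (μ(y)/μ(x))Q(y,x)}` minimizes
the `L¹` distance `d_μ` from `Q` among all `μ`-reversible nonnegative kernels `R`: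
`d_μ(Q, R) ≥ d_μ(Q, M1)`. -/
theorem mh_M1_minimizes_L1 {X : Type*} [MeasurableSpace X] (ν : Measure X) [SigmaFinite ν]
    (μ : X → ℝ) (hμpos : ∀ x, 0 < μ x) (hμmeas : Measurable μ)
    (hμprob : ∫⁻ x, ENNReal.ofReal (μ x) ∂ν = 1)
    (Q : X → X → ℝ) (hQmeas : Measurable fun p : X × X => Q p.1 p.2)
    (hQnonneg : ∀ x y, 0 ≤ Q x y)
    (hQbdd : ∃ C : ℝ, ∀ x, ∫⁻ y in {y | y ≠ x}, ENNReal.ofReal (Q x y) ∂ν ≤ ENNReal.ofReal C)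
    (R : X → X → ℝ) (hRmeas : Measurable fun p : X × X => R p.1 p.2)
    (hRnonneg : ∀ x y, 0 ≤ R x y)
    (hRrev : ∀ᵐ p ∂(ν.prod ν), μ p.1 * R p.1 p.2 = μ p.2 * R p.2 p.1) :
    ∫⁻ p in {p : X × X | p.1 ≠ p.2},
        ENNReal.ofReal (μ p.1 * |Q p.1 p.2 - min (Q p.1 p.2) (μ p.2 / μ p.1 * Q p.2 p.1)|)
        ∂(ν.prod ν)
      ≤ ∫⁻ p in {p : X × X | p.1 ≠ p.2},
          ENNReal.ofReal (μ p.1 * |Q p.1 p.2 - R p.1 p.2|) ∂(ν.prod ν) := by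
  classical
  set S : Set (X × X) := {p : X × X | p.1 ≠ p.2} with hS
  set F : X × X → ℝ≥0∞ := fun p =>
    ENNReal.ofReal (μ p.1 * |Q p.1 p.2 - min (Q p.1 p.2) (μ p.2 / μ p.1 * Q p.2 p.1)|) with hF
  set G : X × X → ℝ≥0∞ := fun p =>
    ENNReal.ofReal (μ p.1 * |Q p.1 p.2 - R p.1 p.2|) with hG
  have hμ1 : Measurable fun p : X × X => μ p.1 := hμmeas.comp measurable_fst
  have hμ2 : Measurable fun p : X × X => μ p.2 := hμmeas.comp measurable_snd
  have hQ' : Measurable fun p : X × X => Q p.2 p.1 := hQmeas.comp measurable_swap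
  have hFmeas : Measurable F :=
    (hμ1.mul ((hQmeas.sub (hQmeas.min ((hμ2.div hμ1).mul hQ'))).abs)).ennreal_ofReal
  have hGmeas : Measurable G :=
    (hμ1.mul ((hQmeas.sub hRmeas).abs)).ennreal_ofReal
  -- swap invariance of the restricted measure
  have hSswap : Prod.swap ⁻¹' S = S := by
    ext p; exact ne_comm
  have hout : ∀ T : Set (X × X), (ν.prod ν) (Prod.swap ⁻¹' T) = (ν.prod ν) T := by
    intro T
    have h1 := MeasurableEquiv.map_apply
      (MeasurableEquiv.prodComm : X × X ≃ᵐ X × X) T (μ := ν.prod ν)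
    have h2 : (ν.prod ν).map (MeasurableEquiv.prodComm : X × X ≃ᵐ X × X) = ν.prod ν := by
      have he : ⇑(MeasurableEquiv.prodComm : X × X ≃ᵐ X × X) = Prod.swap := rfl
      rw [he, Measure.measurePreserving_swap.map_eq]
    rw [h2] at h1
    exact h1.symm
  have hmap : Measure.map Prod.swap ((ν.prod ν).restrict S) = (ν.prod ν).restrict S := by
    ext A hA
    rw [Measure.map_apply measurable_swap hA,
      Measure.restrict_apply (hA.preimage measurable_swap), Measure.restrict_apply hA]
    have hset : Prod.swap ⁻¹' A ∩ S = Prod.swap ⁻¹' (A ∩ S) := by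
      rw [Set.preimage_inter, hSswap]
    rw [hset, hout]
  set μS := (ν.prod ν).restrict S with hμS
  have hswapint : ∀ (H : X × X → ℝ≥0∞), Measurable H →
      ∫⁻ p, H p ∂μS = ∫⁻ p, H p.swap ∂μS := by
    intro H hH
    conv_lhs => rw [← hmap]
    rw [lintegral_map hH measurable_swap]
  -- a.e. pointwise symmetrized inequality
  have hae : ∀ᵐ p ∂μS, μ p.1 * R p.1 p.2 = μ p.2 * R p.2 p.1 :=
    ae_restrict_of_ae hRrev
  have hptwise : ∀ᵐ p ∂μS, F p + F p.swap ≤ G p + G p.swap := by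
    filter_upwards [hae] with p hp
    have hnn1 : 0 ≤ μ p.1 * |Q p.1 p.2 - min (Q p.1 p.2) (μ p.2 / μ p.1 * Q p.2 p.1)| :=
      mul_nonneg (hμpos p.1).le (abs_nonneg _)
    have hnn2 : 0 ≤ μ p.2 * |Q p.2 p.1 - min (Q p.2 p.1) (μ p.1 / μ p.2 * Q p.1 p.2)| :=
      mul_nonneg (hμpos p.2).le (abs_nonneg _)
    have hnn3 : 0 ≤ μ p.1 * |Q p.1 p.2 - R p.1 p.2| :=
      mul_nonneg (hμpos p.1).le (abs_nonneg _)
    have hnn4 : 0 ≤ μ p.2 * |Q p.2 p.1 - R p.2 p.1| :=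
      mul_nonneg (hμpos p.2).le (abs_nonneg _)
    simp only [hF, hG, Prod.fst_swap, Prod.snd_swap]
    rw [← ENNReal.ofReal_add hnn1 hnn2, ← ENNReal.ofReal_add hnn3 hnn4]
    exact ENNReal.ofReal_le_ofReal
      (mh_real_key (μ p.1) (μ p.2) (Q p.1 p.2) (Q p.2 p.1) (R p.1 p.2) (R p.2 p.1)
        (hμpos p.1) (hμpos p.2) hp)
  have hdouble : (∫⁻ p, F p ∂μS) + (∫⁻ p, F p ∂μS) ≤
      (∫⁻ p, G p ∂μS) + (∫⁻ p, G p ∂μS) := by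
    calc (∫⁻ p, F p ∂μS) + (∫⁻ p, F p ∂μS)
        = (∫⁻ p, F p ∂μS) + (∫⁻ p, F p.swap ∂μS) := by rw [hswapint F hFmeas]
      _ = ∫⁻ p, F p + F p.swap ∂μS := (lintegral_add_left hFmeas _).symm
      _ ≤ ∫⁻ p, G p + G p.swap ∂μS := lintegral_mono_ae hptwise
      _ = (∫⁻ p, G p ∂μS) + (∫⁻ p, G p.swap ∂μS) :=
          lintegral_add_left hGmeas _
      _ = (∫⁻ p, G p ∂μS) + (∫⁻ p, G p ∂μS) := by rw [hswapint G hGmeas]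
  rw [← two_mul, ← two_mul] at hdouble
  exact (ENNReal.mul_le_mul_iff_right two_ne_zero (by norm_num)).1 hdouble
end

section
/- Let (X, ν) be a general state space with a sigma-finite reference measure ν, let μ be a strictly positive probability density with respect to ν, and let Q(x,y) ≥ 0 be a measurable jump rate kernel with sup_x ∫_{y ≠ x} Q(x,y) ν(dy) < ∞. With M1(x,y) := min{Q(x,y), (μ(y)/μ(x))Q(y,x)} and M2(x,y) := max{Q(x,y), (μ(y)/μ(x))Q(y,x)}, the two Metropolis-Hastings kernels are equidistant from Q: d_μ(Q,M1) = d_μ(Q,M2), where d_μ(Q1,Q2) := ∫∫_{{(x,y): x ≠ y}} μ(x)|Q1(x,y) − Q2(x,y)| ν(dx)ν(dy). Moreover both are equal to ∫∫_{{(x,y): x ≠ y, μ(x)Q(x,y) < μ(y)Q(y,x)}} |μ(y)Q(y,x) − μ(x)Q(x,y)| ν(dx)ν(dy). -/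
open MeasureTheory

/-- Restricting the pushforward under a measurable equivalence (arbitrary set). -/
lemma restrict_map_equiv {α β : Type*} [MeasurableSpace α] [MeasurableSpace β]
    (e : α ≃ᵐ β) (ρ : Measure α) (s : Set β) :
    (Measure.map e ρ).restrict s = Measure.map e (ρ.restrict (e ⁻¹' s)) := by
  ext A hA
  rw [Measure.restrict_apply hA, MeasurableEquiv.map_apply,
    MeasurableEquiv.map_apply, Measure.restrict_apply (e.measurableSet_preimage.2 hA),
    Set.preimage_inter]

/-- Swap change of variables for set lintegrals on a product of a measure with itself. -/
lemma lintegral_swap_set {X : Type*} [MeasurableSpace X] (ν : Measure X) [SigmaFinite ν]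
    (h : X × X → ENNReal) (s : Set (X × X)) :
    ∫⁻ p in s, h p ∂(ν.prod ν)
      = ∫⁻ p in Prod.swap ⁻¹' s, h (Prod.swap p) ∂(ν.prod ν) := by
  have hmap : Measure.map (MeasurableEquiv.prodComm (α := X) (β := X)) (ν.prod ν)
      = ν.prod ν := by
    have : (MeasurableEquiv.prodComm (α := X) (β := X) : X × X → X × X) = Prod.swap := rfl
    rw [this, Measure.prod_swap]
  conv_lhs => rw [← hmap]
  rw [restrict_map_equiv, lintegral_map_equiv]
  rfl

/-- The two Metropolis-Hastings kernels `M1` (min) and `M2` (max) are equidistant from `Q` in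
the `L¹` distance `d_μ`, and both distances equal the integral of
`|μ(y)Q(y,x) − μ(x)Q(x,y)|` over the off-diagonal half-space where
`μ(x)Q(x,y) < μ(y)Q(y,x)`. -/
theorem mh_M1_M2_equidistant {X : Type*} [MeasurableSpace X] (ν : Measure X) [SigmaFinite ν]
    (μ : X → ℝ) (hμpos : ∀ x, 0 < μ x) (hμmeas : Measurable μ)
    (hμprob : ∫⁻ x, ENNReal.ofReal (μ x) ∂ν = 1)
    (Q : X → X → ℝ) (hQmeas : Measurable fun p : X × X => Q p.1 p.2)
    (hQnonneg : ∀ x y, 0 ≤ Q x y)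
    (hQbdd : ∃ C : ℝ, ∀ x, ∫⁻ y in {y | y ≠ x}, ENNReal.ofReal (Q x y) ∂ν ≤ ENNReal.ofReal C) :
    (∫⁻ p in {p : X × X | p.1 ≠ p.2},
        ENNReal.ofReal (μ p.1 * |Q p.1 p.2 - min (Q p.1 p.2) (μ p.2 / μ p.1 * Q p.2 p.1)|)
        ∂(ν.prod ν)
      = ∫⁻ p in {p : X × X | p.1 ≠ p.2},
          ENNReal.ofReal (μ p.1 * |Q p.1 p.2 - max (Q p.1 p.2) (μ p.2 / μ p.1 * Q p.2 p.1)|)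
          ∂(ν.prod ν)) ∧
    (∫⁻ p in {p : X × X | p.1 ≠ p.2},
        ENNReal.ofReal (μ p.1 * |Q p.1 p.2 - min (Q p.1 p.2) (μ p.2 / μ p.1 * Q p.2 p.1)|)
        ∂(ν.prod ν)
      = ∫⁻ p in {p : X × X | p.1 ≠ p.2 ∧ μ p.1 * Q p.1 p.2 < μ p.2 * Q p.2 p.1},
          ENNReal.ofReal |μ p.2 * Q p.2 p.1 - μ p.1 * Q p.1 p.2| ∂(ν.prod ν)) := by
  -- pointwise identities
  have hA : ∀ x y : X, μ x * |Q x y - min (Q x y) (μ y / μ x * Q y x)|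
      = max (μ x * Q x y - μ y * Q y x) 0 := by
    intro x y
    have hx := (hμpos x).ne'
    have ht : μ x * (μ y / μ x * Q y x) = μ y * Q y x := by field_simp
    rcases le_total (Q x y) (μ y / μ x * Q y x) with h | h
    · rw [min_eq_left h]
      have : μ x * Q x y - μ y * Q y x ≤ 0 := by
        nlinarith [(hμpos x).le, mul_le_mul_of_nonneg_left h (hμpos x).le]
      simp [max_eq_right this]
    · rw [min_eq_right h, abs_of_nonneg (sub_nonneg.2 h)]
      have : 0 ≤ μ x * Q x y - μ y * Q y x := by
        nlinarith [(hμpos x).le, mul_le_mul_of_nonneg_left h (hμpos x).le]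
      rw [max_eq_left this, mul_sub, ht]
  have hB : ∀ x y : X, μ x * |Q x y - max (Q x y) (μ y / μ x * Q y x)|
      = max (μ y * Q y x - μ x * Q x y) 0 := by
    intro x y
    have hx := (hμpos x).ne'
    have ht : μ x * (μ y / μ x * Q y x) = μ y * Q y x := by field_simp
    rcases le_total (Q x y) (μ y / μ x * Q y x) with h | h
    · rw [max_eq_right h, abs_sub_comm, abs_of_nonneg (sub_nonneg.2 h)]
      have : 0 ≤ μ y * Q y x - μ x * Q x y := by
        nlinarith [(hμpos x).le, mul_le_mul_of_nonneg_left h (hμpos x).le]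
      rw [max_eq_left this, mul_sub, ht]
    · rw [max_eq_left h]
      have : μ y * Q y x - μ x * Q x y ≤ 0 := by
        nlinarith [(hμpos x).le, mul_le_mul_of_nonneg_left h (hμpos x).le]
      simp [max_eq_right this]
  set s : Set (X × X) := {p : X × X | p.1 ≠ p.2} with hs
  -- rewrite both integrands
  have hminint : ∫⁻ p in s,
      ENNReal.ofReal (μ p.1 * |Q p.1 p.2 - min (Q p.1 p.2) (μ p.2 / μ p.1 * Q p.2 p.1)|)
      ∂(ν.prod ν)
      = ∫⁻ p in s, ENNReal.ofReal (max (μ p.1 * Q p.1 p.2 - μ p.2 * Q p.2 p.1) 0)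
        ∂(ν.prod ν) := by
    refine lintegral_congr fun p => by rw [hA]
  have hmaxint : ∫⁻ p in s,
      ENNReal.ofReal (μ p.1 * |Q p.1 p.2 - max (Q p.1 p.2) (μ p.2 / μ p.1 * Q p.2 p.1)|)
      ∂(ν.prod ν)
      = ∫⁻ p in s, ENNReal.ofReal (max (μ p.2 * Q p.2 p.1 - μ p.1 * Q p.1 p.2) 0)
        ∂(ν.prod ν) := by
    refine lintegral_congr fun p => by rw [hB]
  -- swap symmetry
  have hswapset : Prod.swap ⁻¹' s = s := by
    ext p; simp [hs, ne_comm]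
  have hswap : ∫⁻ p in s, ENNReal.ofReal (max (μ p.1 * Q p.1 p.2 - μ p.2 * Q p.2 p.1) 0)
        ∂(ν.prod ν)
      = ∫⁻ p in s, ENNReal.ofReal (max (μ p.2 * Q p.2 p.1 - μ p.1 * Q p.1 p.2) 0)
        ∂(ν.prod ν) := by
    rw [lintegral_swap_set ν
        (fun p => ENNReal.ofReal (max (μ p.1 * Q p.1 p.2 - μ p.2 * Q p.2 p.1) 0)) s, hswapset]
    rfl
  constructor
  · rw [hminint, hmaxint, hswap]
  · rw [hminint, hswap]
    -- now reduce to the half-space integral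
    have ht : MeasurableSet {p : X × X | μ p.1 * Q p.1 p.2 < μ p.2 * Q p.2 p.1} := by
      apply measurableSet_lt
      · exact (hμmeas.comp measurable_fst).mul hQmeas
      · exact (hμmeas.comp measurable_snd).mul
          (hQmeas.comp measurable_swap)
    have hind : ∀ p : X × X,
        ENNReal.ofReal (max (μ p.2 * Q p.2 p.1 - μ p.1 * Q p.1 p.2) 0)
          = Set.indicator {p : X × X | μ p.1 * Q p.1 p.2 < μ p.2 * Q p.2 p.1}
            (fun p => ENNReal.ofReal |μ p.2 * Q p.2 p.1 - μ p.1 * Q p.1 p.2|) p := by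
      intro p
      simp only [Set.indicator_apply, Set.mem_setOf_eq]
      by_cases h : μ p.1 * Q p.1 p.2 < μ p.2 * Q p.2 p.1
      · rw [if_pos h, max_eq_left (by linarith), abs_of_nonneg (by linarith)]
      · rw [if_neg h, max_eq_right (by push_neg at h; linarith)]
        simp
    calc ∫⁻ p in s, ENNReal.ofReal (max (μ p.2 * Q p.2 p.1 - μ p.1 * Q p.1 p.2) 0)
          ∂(ν.prod ν)
        = ∫⁻ p in s, Set.indicator {p : X × X | μ p.1 * Q p.1 p.2 < μ p.2 * Q p.2 p.1}
            (fun p => ENNReal.ofReal |μ p.2 * Q p.2 p.1 - μ p.1 * Q p.1 p.2|) p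
          ∂(ν.prod ν) := lintegral_congr fun p => hind p
      _ = ∫⁻ p in {p : X × X | μ p.1 * Q p.1 p.2 < μ p.2 * Q p.2 p.1},
            ENNReal.ofReal |μ p.2 * Q p.2 p.1 - μ p.1 * Q p.1 p.2|
          ∂((ν.prod ν).restrict s) := lintegral_indicator ht _
      _ = ∫⁻ p in {p : X × X | p.1 ≠ p.2 ∧ μ p.1 * Q p.1 p.2 < μ p.2 * Q p.2 p.1},
            ENNReal.ofReal |μ p.2 * Q p.2 p.1 - μ p.1 * Q p.1 p.2| ∂(ν.prod ν) := by
          rw [Measure.restrict_restrict ht]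
          have : {p : X × X | μ p.1 * Q p.1 p.2 < μ p.2 * Q p.2 p.1} ∩ s
              = {p : X × X | p.1 ≠ p.2 ∧ μ p.1 * Q p.1 p.2 < μ p.2 * Q p.2 p.1} := by
            ext p; simp only [Set.mem_inter_iff, Set.mem_setOf_eq, hs]; tauto
          rw [this]
end

section
/- Let (X, ν) be a general state space with a sigma-finite reference measure ν, let μ be a strictly positive probability density with respect to ν, and let Q(x,y) ≥ 0 be a measurable jump rate kernel with sup_x ∫_{y ≠ x} Q(x,y) ν(dy) < ∞. With M1(x,y) := min{Q(x,y), (μ(y)/μ(x))Q(y,x)} and M2(x,y) := max{Q(x,y), (μ(y)/μ(x))Q(y,x)}, for every α ∈ [0,1] the convex combination satisfies d_μ(Q, αM1 + (1−α)M2) = (1−α) d_μ(Q,M2) + α d_μ(Q,M1) = d_μ(Q,M1), where d_μ(Q1,Q2) := ∫∫_{{(x,y): x ≠ y}} μ(x)|Q1(x,y) − Q2(x,y)| ν(dx)ν(dy). -/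
open MeasureTheory
open scoped ENNReal

private lemma mh_aux_lintegral_offdiag {Y : Type*} [MeasurableSpace Y] (π : Measure Y)
    [SFinite π] (s : Set Y) (f : Y → ℝ≥0∞) (h0 : ∀ y, y ∉ s → f y = 0) :
    ∫⁻ y in s, f y ∂π = ∫⁻ y, f y ∂π := by
  classical
  rw [← Measure.restrict_toMeasurable_of_sFinite s,
    ← lintegral_indicator (measurableSet_toMeasurable π s)]
  congr 1
  ext y
  rw [Set.indicator_apply]
  split_ifs with h
  · rfl
  · exact (h0 y fun hy => h (subset_toMeasurable π s hy)).symm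

private lemma mh_aux_abs_convex (q r α : ℝ) (h0 : 0 ≤ α) (h1 : α ≤ 1) :
    |q - (α * min q r + (1 - α) * max q r)| = α * |q - min q r| + (1 - α) * |q - max q r| := by
  rcases le_total q r with h | h
  · rw [min_eq_left h, max_eq_right h,
      show q - (α * q + (1 - α) * r) = (1 - α) * (q - r) by ring, abs_mul,
      abs_of_nonneg (by linarith : (0:ℝ) ≤ 1 - α)]
    simp
  · rw [min_eq_right h, max_eq_left h,
      show q - (α * r + (1 - α) * q) = α * (q - r) by ring, abs_mul,
      abs_of_nonneg h0]
    simp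

private lemma mh_aux_min_form (mx my q r : ℝ) (hmx : 0 < mx) :
    mx * |q - min q (my / mx * r)| = max (mx * q) (my * r) - my * r := by
  have h1 : mx * (my / mx * r) = my * r := by field_simp
  rw [abs_of_nonneg (sub_nonneg.2 (min_le_left _ _)), mul_sub,
    mul_min_of_nonneg _ _ hmx.le, h1]
  rcases le_total (mx * q) (my * r) with h | h
  · rw [min_eq_left h, max_eq_right h]; ring
  · rw [min_eq_right h, max_eq_left h]

private lemma mh_aux_max_form (mx my q r : ℝ) (hmx : 0 < mx) :
    mx * |q - max q (my / mx * r)| = max (mx * q) (my * r) - mx * q := by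
  have h1 : mx * (my / mx * r) = my * r := by field_simp
  rw [abs_sub_comm, abs_of_nonneg (sub_nonneg.2 (le_max_left _ _)), mul_sub,
    mul_max_of_nonneg _ _ hmx.le, h1]

/-- For every `α ∈ [0,1]`, the convex combination `αM1 + (1−α)M2` of the two
Metropolis-Hastings kernels satisfies
`d_μ(Q, αM1 + (1−α)M2) = (1−α) d_μ(Q,M2) + α d_μ(Q,M1) = d_μ(Q,M1)`. -/
theorem mh_convex_combination_distance {X : Type*} [MeasurableSpace X] (ν : Measure X)
    [SigmaFinite ν]
    (μ : X → ℝ) (hμpos : ∀ x, 0 < μ x) (hμmeas : Measurable μ)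
    (hμprob : ∫⁻ x, ENNReal.ofReal (μ x) ∂ν = 1)
    (Q : X → X → ℝ) (hQmeas : Measurable fun p : X × X => Q p.1 p.2)
    (hQnonneg : ∀ x y, 0 ≤ Q x y)
    (hQbdd : ∃ C : ℝ, ∀ x, ∫⁻ y in {y | y ≠ x}, ENNReal.ofReal (Q x y) ∂ν ≤ ENNReal.ofReal C)
    (α : ℝ) (hα : α ∈ Set.Icc (0:ℝ) 1) :
    (∫⁻ p in {p : X × X | p.1 ≠ p.2},
        ENNReal.ofReal (μ p.1 *
          |Q p.1 p.2 - (α * min (Q p.1 p.2) (μ p.2 / μ p.1 * Q p.2 p.1)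
            + (1 - α) * max (Q p.1 p.2) (μ p.2 / μ p.1 * Q p.2 p.1))|)
        ∂(ν.prod ν)
      = ENNReal.ofReal (1 - α) *
          (∫⁻ p in {p : X × X | p.1 ≠ p.2},
            ENNReal.ofReal (μ p.1 * |Q p.1 p.2 - max (Q p.1 p.2) (μ p.2 / μ p.1 * Q p.2 p.1)|)
            ∂(ν.prod ν))
        + ENNReal.ofReal α *
          (∫⁻ p in {p : X × X | p.1 ≠ p.2},
            ENNReal.ofReal (μ p.1 * |Q p.1 p.2 - min (Q p.1 p.2) (μ p.2 / μ p.1 * Q p.2 p.1)|)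
            ∂(ν.prod ν))) ∧
    (∫⁻ p in {p : X × X | p.1 ≠ p.2},
        ENNReal.ofReal (μ p.1 *
          |Q p.1 p.2 - (α * min (Q p.1 p.2) (μ p.2 / μ p.1 * Q p.2 p.1)
            + (1 - α) * max (Q p.1 p.2) (μ p.2 / μ p.1 * Q p.2 p.1))|)
        ∂(ν.prod ν)
      = ∫⁻ p in {p : X × X | p.1 ≠ p.2},
          ENNReal.ofReal (μ p.1 * |Q p.1 p.2 - min (Q p.1 p.2) (μ p.2 / μ p.1 * Q p.2 p.1)|)
          ∂(ν.prod ν)) := by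
  obtain ⟨hα0, hα1⟩ := hα
  set s : Set (X × X) := {p : X × X | p.1 ≠ p.2} with hs
  set F : X × X → ℝ≥0∞ := fun p =>
    ENNReal.ofReal (μ p.1 * |Q p.1 p.2 - min (Q p.1 p.2) (μ p.2 / μ p.1 * Q p.2 p.1)|) with hF
  set G : X × X → ℝ≥0∞ := fun p =>
    ENNReal.ofReal (μ p.1 * |Q p.1 p.2 - max (Q p.1 p.2) (μ p.2 / μ p.1 * Q p.2 p.1)|) with hG
  set H : X × X → ℝ≥0∞ := fun p =>
    ENNReal.ofReal (μ p.1 *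
      |Q p.1 p.2 - (α * min (Q p.1 p.2) (μ p.2 / μ p.1 * Q p.2 p.1)
        + (1 - α) * max (Q p.1 p.2) (μ p.2 / μ p.1 * Q p.2 p.1))|) with hH
  -- measurability
  have hμ1 : Measurable fun p : X × X => μ p.1 := hμmeas.comp measurable_fst
  have hQ' : Measurable fun p : X × X => Q p.2 p.1 := hQmeas.comp measurable_swap
  have hratio : Measurable fun p : X × X => μ p.2 / μ p.1 * Q p.2 p.1 :=
    ((hμmeas.comp measurable_snd).div hμ1).mul hQ'
  have hFm : Measurable F :=
    ENNReal.measurable_ofReal.comp (hμ1.mul ((hQmeas.sub (hQmeas.min hratio)).abs))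
  have hGm : Measurable G :=
    ENNReal.measurable_ofReal.comp (hμ1.mul ((hQmeas.sub (hQmeas.max hratio)).abs))
  have hHm : Measurable H :=
    ENNReal.measurable_ofReal.comp (hμ1.mul ((hQmeas.sub
      (((hQmeas.min hratio).const_mul α).add ((hQmeas.max hratio).const_mul (1 - α)))).abs))
  -- diagonal vanishing
  have hdiagF : ∀ p : X × X, p ∉ s → F p = 0 := by
    rintro ⟨x, y⟩ hp
    have hxy : x = y := not_not.1 hp
    subst hxy
    simp [hF, div_self (hμpos x).ne']
  have hdiagG : ∀ p : X × X, p ∉ s → G p = 0 := by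
    rintro ⟨x, y⟩ hp
    have hxy : x = y := not_not.1 hp
    subst hxy
    simp [hG, div_self (hμpos x).ne']
  have hdiagH : ∀ p : X × X, p ∉ s → H p = 0 := by
    rintro ⟨x, y⟩ hp
    have hxy : x = y := not_not.1 hp
    subst hxy
    have h1 : Q x x - (α * Q x x + (1 - α) * Q x x) = 0 := by ring
    simp [hH, div_self (hμpos x).ne', h1]
  -- reduce to full-space integrals
  have hFfull := mh_aux_lintegral_offdiag (ν.prod ν) s F hdiagF
  have hGfull := mh_aux_lintegral_offdiag (ν.prod ν) s G hdiagG
  have hHfull := mh_aux_lintegral_offdiag (ν.prod ν) s H hdiagH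
  -- pointwise convex identity
  have key1 : ∀ p : X × X, H p = ENNReal.ofReal (1 - α) * G p + ENNReal.ofReal α * F p := by
    rintro ⟨x, y⟩
    simp only [hF, hG, hH]
    rw [mh_aux_abs_convex (Q x y) (μ y / μ x * Q y x) α hα0 hα1,
      show μ x * (α * |Q x y - min (Q x y) (μ y / μ x * Q y x)|
          + (1 - α) * |Q x y - max (Q x y) (μ y / μ x * Q y x)|)
        = (1 - α) * (μ x * |Q x y - max (Q x y) (μ y / μ x * Q y x)|)
          + α * (μ x * |Q x y - min (Q x y) (μ y / μ x * Q y x)|) from by ring,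
      ENNReal.ofReal_add
        (mul_nonneg (by linarith) (mul_nonneg (hμpos x).le (abs_nonneg _)))
        (mul_nonneg hα0 (mul_nonneg (hμpos x).le (abs_nonneg _))),
      ENNReal.ofReal_mul (by linarith : (0:ℝ) ≤ 1 - α), ENNReal.ofReal_mul hα0]
  have hHint : ∫⁻ p, H p ∂(ν.prod ν)
      = ENNReal.ofReal (1 - α) * ∫⁻ p, G p ∂(ν.prod ν)
        + ENNReal.ofReal α * ∫⁻ p, F p ∂(ν.prod ν) := by
    rw [lintegral_congr key1,
      lintegral_add_left (hGm.const_mul _),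
      lintegral_const_mul _ hGm, lintegral_const_mul _ hFm]
  -- swap symmetry: ∫ G = ∫ F
  have hswap : ∀ p : X × X, G p = F p.swap := by
    rintro ⟨x, y⟩
    simp only [hF, hG, Prod.swap_prod_mk]
    rw [mh_aux_max_form (μ x) (μ y) (Q x y) (Q y x) (hμpos x),
      mh_aux_min_form (μ y) (μ x) (Q y x) (Q x y) (hμpos y), max_comm]
  have hGF : ∫⁻ p, G p ∂(ν.prod ν) = ∫⁻ p, F p ∂(ν.prod ν) := by
    rw [lintegral_congr hswap]
    exact (Measure.measurePreserving_swap (μ := ν) (ν := ν)).lintegral_comp hFm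
  constructor
  · rw [hFfull, hGfull, hHfull, hHint]
  · rw [hFfull, hHfull, hHint, hGF, ← add_mul, ← ENNReal.ofReal_add (by linarith) hα0]
    norm_num
end

section
/- Let U: ℝ^d → ℝ be continuously differentiable with ∇U bounded and Lipschitz continuous, and let T > 0. Define s_{M2}(x,y) := exp((U(x) − U(y))₊/T) and ŝ_{M2}(x,y) := exp(⟨∇U(x), x − y⟩₊/T), where a₊ := max{a,0}. Then there exist positive constants M and c₁ depending only on U and T such that for all x, y ∈ ℝ^d: |s_{M2}(x,y) − ŝ_{M2}(x,y)| ≤ c₁ exp(M Σ_{i=1}^d |y_i − x_i|) ‖y − x‖², where ‖·‖ is the Euclidean norm. -/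
/-!
Both acceptance factors are `exp` of a nonnegative exponent, and on `(-∞, m]` the exponential is
Lipschitz with constant `exp m`. The two exponents differ by at most the first-order Taylor
remainder of `U`, which is `O(‖y - x‖²)` because `∇U` is Lipschitz, and both are `O(‖y - x‖)`
because `∇U` is bounded; finally `‖y - x‖ ≤ Σᵢ |yᵢ - xᵢ|`.
-/

open Real NNReal

theorem Real.abs_exp_sub_exp_le (a b : ℝ) : |exp a - exp b| ≤ exp (max a b) * |a - b| := by
  wlog hba : b ≤ a generalizing a b
  · rw [abs_sub_comm, max_comm, abs_sub_comm a]
    exact this b a (le_of_not_ge hba)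
  have hexp : exp a - exp b = exp a * (1 - exp (-(a - b))) := by
    rw [mul_sub, ← exp_add]; ring_nf
  rw [abs_of_nonneg (sub_nonneg.2 (exp_le_exp.2 hba)), abs_of_nonneg (sub_nonneg.2 hba),
    max_eq_left hba, hexp]
  exact mul_le_mul_of_nonneg_left (by linarith [one_sub_le_exp_neg (a - b)]) (exp_pos a).le

theorem EuclideanSpace.norm_le_sum_norm {𝕜 ι : Type*} [RCLike 𝕜] [Fintype ι]
    (v : EuclideanSpace 𝕜 ι) : ‖v‖ ≤ ∑ i, ‖v i‖ := by
  rw [EuclideanSpace.norm_eq, sqrt_le_left (by positivity)]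
  exact Finset.sum_sq_le_sq_sum_of_nonneg fun i _ => norm_nonneg _

theorem norm_image_sub_sub_fderiv_le_of_lipschitzWith {E F : Type*} [NormedAddCommGroup E]
    [NormedSpace ℝ E] [NormedAddCommGroup F] [NormedSpace ℝ F] {f : E → F} {L : ℝ≥0}
    (hf : Differentiable ℝ f) (hlip : LipschitzWith L (fderiv ℝ f)) (x y : E) :
    ‖f y - f x - fderiv ℝ f x (y - x)‖ ≤ L * ‖y - x‖ ^ 2 := by
  have hbound : ∀ z ∈ Metric.closedBall x ‖y - x‖, ‖fderiv ℝ f z - fderiv ℝ f x‖ ≤ L * ‖y - x‖ :=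
    fun z hz => by
      rw [← dist_eq_norm]
      exact (hlip.dist_le_mul z x).trans (by gcongr; exact hz)
  have hmean_value := (convex_closedBall x ‖y - x‖).norm_image_sub_le_of_norm_fderiv_le'
    (fun z _ => hf z) hbound (Metric.mem_closedBall_self (norm_nonneg _)) (y := y)
    (by simp [dist_eq_norm])
  linarith

theorem abs_exp_posPart_sub_exp_posPart_fderiv_le {E : Type*} [NormedAddCommGroup E]
    [NormedSpace ℝ E] {U : E → ℝ} {T K : ℝ} {L : ℝ≥0} (hT : 0 < T) (hU : Differentiable ℝ U)
    (hbd : ∀ x, ‖fderiv ℝ U x‖ ≤ K) (hlip : LipschitzWith L (fderiv ℝ U)) (x y : E) :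
    |exp (max (U x - U y) 0 / T) - exp (max (fderiv ℝ U x (x - y)) 0 / T)|
      ≤ L / T * exp (K / T * ‖y - x‖) * ‖y - x‖ ^ 2 := by
  have posPart_div_le {p : ℝ} (hp : |p| ≤ K * ‖y - x‖) : max p 0 / T ≤ K / T * ‖y - x‖ := by
    rw [div_mul_eq_mul_div]
    gcongr
    exact max_le ((le_abs_self p).trans hp) ((abs_nonneg p).trans hp)
  have hU_sub : |U x - U y| ≤ K * ‖y - x‖ := by
    simpa [norm_sub_rev x y] using convex_univ.norm_image_sub_le_of_norm_fderiv_le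
      (fun z _ => hU z) (fun z _ => hbd z) (Set.mem_univ y) (Set.mem_univ x)
  have hfderiv : |fderiv ℝ U x (x - y)| ≤ K * ‖y - x‖ := by
    rw [norm_sub_rev y x]
    exact ((fderiv ℝ U x).le_opNorm _).trans (by gcongr; exact hbd x)
  have hremainder : |(U x - U y) - fderiv ℝ U x (x - y)| ≤ L * ‖y - x‖ ^ 2 := by
    rw [← neg_sub y x, map_neg, show U x - U y - -fderiv ℝ U x (y - x)
      = -(U y - U x - fderiv ℝ U x (y - x)) by ring, abs_neg]
    exact norm_image_sub_sub_fderiv_le_of_lipschitzWith hU hlip x y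
  have hmax : max (max (U x - U y) 0 / T) (max (fderiv ℝ U x (x - y)) 0 / T)
      ≤ K / T * ‖y - x‖ := max_le (posPart_div_le hU_sub) (posPart_div_le hfderiv)
  have hdiff : |max (U x - U y) 0 / T - max (fderiv ℝ U x (x - y)) 0 / T|
      ≤ L / T * ‖y - x‖ ^ 2 := by
    rw [div_sub_div_same, abs_div, abs_of_pos hT, div_mul_eq_mul_div]
    gcongr
    exact (abs_max_sub_max_le_abs _ _ _).trans hremainder
  calc _ ≤ exp (K / T * ‖y - x‖) * (L / T * ‖y - x‖ ^ 2) :=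
        (abs_exp_sub_exp_le _ _).trans (by gcongr)
    _ = L / T * exp (K / T * ‖y - x‖) * ‖y - x‖ ^ 2 := by ring

/-- Lemma 1 of the paper: the acceptance factor `s_{M2}(x,y) = exp((U(x)−U(y))₊/T)` of the
second Metropolis-Hastings process and its linearization
`ŝ_{M2}(x,y) = exp(⟨∇U(x), x−y⟩₊/T)` differ by at most
`c₁ exp(M Σᵢ |yᵢ − xᵢ|) ‖y − x‖²` for constants `M, c₁ > 0` depending only on `U` and `T`. -/
theorem mh2_acceptance_linearization {d : ℕ} (T : ℝ) (hT : 0 < T)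
    (U : EuclideanSpace ℝ (Fin d) → ℝ) (hU : ContDiff ℝ 1 U)
    (K : ℝ) (hbd : ∀ x, ‖fderiv ℝ U x‖ ≤ K)
    (L : NNReal) (hlip : LipschitzWith L (fderiv ℝ U)) :
    ∃ M c₁ : ℝ, 0 < M ∧ 0 < c₁ ∧
      ∀ x y : EuclideanSpace ℝ (Fin d),
        |Real.exp (max (U x - U y) 0 / T) - Real.exp (max (fderiv ℝ U x (x - y)) 0 / T)|
          ≤ c₁ * Real.exp (M * ∑ i, |y i - x i|) * ‖y - x‖ ^ 2 := by
  have hK : 0 ≤ K := (norm_nonneg _).trans (hbd 0)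
  refine ⟨K / T + 1, L / T + 1, by positivity, by positivity, fun x y => ?_⟩
  have hnorm_le_l1 : ‖y - x‖ ≤ ∑ i, |y i - x i| := by
    simpa using EuclideanSpace.norm_le_sum_norm (y - x)
  calc _ ≤ L / T * exp (K / T * ‖y - x‖) * ‖y - x‖ ^ 2 :=
        abs_exp_posPart_sub_exp_posPart_fderiv_le hT (hU.differentiable one_ne_zero) hbd hlip x y
    _ ≤ (L / T + 1) * exp ((K / T + 1) * ∑ i, |y i - x i|) * ‖y - x‖ ^ 2 := by
        gcongr
        · linarith
        · linarith
end

section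
/- Fix M > 0 and let φ₁ denote the density of the standard normal distribution. Then there exist C > 0 and ε₀ > 0 such that for all 0 < ε < ε₀ and all a ∈ ℝ with |a| ≤ M: | ε^{−1/2} ( ∫_{{z : az ≤ 0}} z e^{−a √ε z} φ₁(z) dz + ∫_{{z : az > 0}} z φ₁(z) dz ) + a/2 | ≤ C √ε. -/
open MeasureTheory

/-- Density of the standard normal distribution. -/
noncomputable def stdGaussDensity (z : ℝ) : ℝ :=
  (Real.sqrt (2 * Real.pi))⁻¹ * Real.exp (-z ^ 2 / 2)

/-!
For `a > 0` put `b = a√ε` and let `Φ` be the normal CDF. Completing the square,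
`e^{-bz} φ(z) = e^{b²/2} φ(z + b)`, so after the shift `z ↦ z - b` the first integral is
`e^{b²/2} (-φ(b) - b Φ(b))`, while the second is `φ(0) = e^{b²/2} φ(b)`. Hence the bracket equals
exactly `-b e^{b²/2} Φ(b)`, and the case `a < 0` follows from `z ↦ -z`. Since
`e^{b²/2} = 1 + O(b²)` and `Φ(b) = 1/2 + O(b)`, dividing by `√ε` leaves `-a/2 + O(a²√ε)`.
-/

open ProbabilityTheory Real Set Filter Topology

lemma stdGaussDensity_eq_gaussianPDFReal : stdGaussDensity = gaussianPDFReal 0 1 := by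
  ext z
  simp [stdGaussDensity, gaussianPDFReal]

lemma stdGaussDensity_nonneg (z : ℝ) : 0 ≤ stdGaussDensity z := by
  rw [stdGaussDensity_eq_gaussianPDFReal]
  exact gaussianPDFReal_nonneg 0 1 z

lemma stdGaussDensity_le_one (z : ℝ) : stdGaussDensity z ≤ 1 := by
  have h2π : 1 ≤ √(2 * π) := one_le_sqrt.mpr (by linarith [pi_gt_three])
  have hexp : exp (-z ^ 2 / 2) ≤ 1 := exp_le_one_iff.mpr (by nlinarith [sq_nonneg z])
  exact mul_le_one₀ (inv_le_one_of_one_le₀ h2π) (exp_pos _).le hexp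

lemma stdGaussDensity_neg (z : ℝ) : stdGaussDensity (-z) = stdGaussDensity z := by
  simp [stdGaussDensity]

lemma integrable_stdGaussDensity : Integrable stdGaussDensity := by
  rw [stdGaussDensity_eq_gaussianPDFReal]
  exact integrable_gaussianPDFReal 0 1

lemma integral_stdGaussDensity : ∫ z, stdGaussDensity z = 1 := by
  rw [stdGaussDensity_eq_gaussianPDFReal]
  exact integral_gaussianPDFReal_eq_one 0 one_ne_zero

lemma integrable_mul_stdGaussDensity : Integrable fun z => z * stdGaussDensity z := by
  have h := (integrable_mul_exp_neg_mul_sq (by norm_num : (0:ℝ) < 1 / 2)).const_mul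
    (√(2 * π))⁻¹
  refine h.congr (Eventually.of_forall fun z => ?_)
  simp only [stdGaussDensity]
  ring_nf

lemma hasDerivAt_stdGaussDensity (z : ℝ) :
    HasDerivAt stdGaussDensity (-(z * stdGaussDensity z)) z := by
  have hexponent : HasDerivAt (fun x : ℝ => -x ^ 2 / 2) (-z) z :=
    ((hasDerivAt_pow 2 z).fun_neg.div_const 2).congr_deriv (by norm_num; ring)
  exact (hexponent.exp.const_mul (√(2 * π))⁻¹).congr_deriv
    (by simp only [stdGaussDensity]; ring)

lemma tendsto_stdGaussDensity_atTop : Tendsto stdGaussDensity atTop (𝓝 0) := by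
  have h : Tendsto (fun z : ℝ => -z ^ 2 / 2) atTop atBot :=
    (tendsto_neg_atTop_atBot.comp (tendsto_pow_atTop two_ne_zero)).atBot_div_const two_pos
  exact (mul_zero (√(2 * π))⁻¹) ▸ (tendsto_exp_atBot.comp h).const_mul (√(2 * π))⁻¹

lemma tendsto_stdGaussDensity_atBot : Tendsto stdGaussDensity atBot (𝓝 0) := by
  have h := tendsto_stdGaussDensity_atTop.comp tendsto_neg_atBot_atTop
  simpa [Function.comp_def, stdGaussDensity_neg] using h

lemma setIntegral_Iic_mul_stdGaussDensity (c : ℝ) :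
    ∫ z in Iic c, z * stdGaussDensity z = -stdGaussDensity c := by
  rw [integral_Iic_of_hasDerivAt_of_tendsto'
    (fun z _ => (hasDerivAt_stdGaussDensity z).neg.congr_deriv (neg_neg _))
    integrable_mul_stdGaussDensity.integrableOn tendsto_stdGaussDensity_atBot.neg]
  simp

lemma setIntegral_Ioi_mul_stdGaussDensity (c : ℝ) :
    ∫ z in Ioi c, z * stdGaussDensity z = stdGaussDensity c := by
  rw [integral_Ioi_of_hasDerivAt_of_tendsto'
    (fun z _ => (hasDerivAt_stdGaussDensity z).neg.congr_deriv (neg_neg _))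
    integrable_mul_stdGaussDensity.integrableOn tendsto_stdGaussDensity_atTop.neg]
  simp

lemma exp_mul_stdGaussDensity (b z : ℝ) :
    exp (-(b * z)) * stdGaussDensity z = exp (b ^ 2 / 2) * stdGaussDensity (z + b) := by
  simp only [stdGaussDensity]
  rw [mul_left_comm, ← exp_add, mul_left_comm, ← exp_add]
  ring_nf

noncomputable def stdGaussCDF (b : ℝ) : ℝ := ∫ z in Iic b, stdGaussDensity z

lemma stdGaussCDF_nonneg (b : ℝ) : 0 ≤ stdGaussCDF b :=
  setIntegral_nonneg measurableSet_Iic fun z _ => stdGaussDensity_nonneg z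

lemma stdGaussCDF_le_one (b : ℝ) : stdGaussCDF b ≤ 1 :=
  integral_stdGaussDensity ▸
    setIntegral_le_integral integrable_stdGaussDensity (Eventually.of_forall stdGaussDensity_nonneg)

lemma stdGaussCDF_zero : stdGaussCDF 0 = 1 / 2 := by
  have hsymm : stdGaussCDF 0 = ∫ z in Ioi 0, stdGaussDensity z := by
    simpa [stdGaussCDF, stdGaussDensity_neg] using integral_comp_neg_Iic 0 stdGaussDensity
  have htotal := intervalIntegral.integral_Iic_add_Ioi (b := 0)
    integrable_stdGaussDensity.integrableOn integrable_stdGaussDensity.integrableOn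
  rw [integral_stdGaussDensity, ← stdGaussCDF, ← hsymm] at htotal
  linarith

lemma abs_stdGaussCDF_sub_half_le (b : ℝ) : |stdGaussCDF b - 1 / 2| ≤ |b| := by
  rw [← stdGaussCDF_zero, stdGaussCDF, stdGaussCDF, intervalIntegral.integral_Iic_sub_Iic
    integrable_stdGaussDensity.integrableOn integrable_stdGaussDensity.integrableOn]
  simpa using intervalIntegral.norm_integral_le_of_norm_le_const (a := 0) (b := b) (C := 1)
    (f := stdGaussDensity) fun z _ => by
      simpa [abs_of_nonneg (stdGaussDensity_nonneg z)] using stdGaussDensity_le_one z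

lemma abs_half_sub_exp_mul_stdGaussCDF_le {b : ℝ} (hb : |b| ≤ 1) :
    |1 / 2 - exp (b ^ 2 / 2) * stdGaussCDF b| ≤ 2 * |b| := by
  have hexp : |exp (b ^ 2 / 2) - 1| ≤ |b| := by
    have hsq : b ^ 2 ≤ |b| := by nlinarith [sq_abs b, abs_nonneg b]
    calc |exp (b ^ 2 / 2) - 1| ≤ 2 * |b ^ 2 / 2| :=
          abs_exp_sub_one_le (by rw [abs_of_nonneg (by positivity)]; linarith)
      _ = b ^ 2 := by rw [abs_of_nonneg (by positivity)]; ring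
      _ ≤ |b| := hsq
  have hcdf : |stdGaussCDF b| ≤ 1 := by
    rw [abs_of_nonneg (stdGaussCDF_nonneg b)]
    exact stdGaussCDF_le_one b
  calc |1 / 2 - exp (b ^ 2 / 2) * stdGaussCDF b|
      = |(exp (b ^ 2 / 2) - 1) * stdGaussCDF b + (stdGaussCDF b - 1 / 2)| := by
        rw [abs_sub_comm]; ring_nf
    _ ≤ |exp (b ^ 2 / 2) - 1| * |stdGaussCDF b| + |stdGaussCDF b - 1 / 2| := by
        rw [← abs_mul]; exact abs_add_le _ _
    _ ≤ |b| * 1 + |b| :=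
        add_le_add (mul_le_mul hexp hcdf (abs_nonneg _) (abs_nonneg _))
          (abs_stdGaussCDF_sub_half_le b)
    _ = 2 * |b| := by ring

section ChangeOfVariables

variable {E : Type*} [NormedAddCommGroup E] [NormedSpace ℝ E]

lemma setIntegral_Iic_comp_add_right (g : ℝ → E) (b c : ℝ) :
    ∫ z in Iic c, g (z + b) = ∫ w in Iic (c + b), g w := by
  have h := (measurePreserving_add_right volume b).setIntegral_preimage_emb
    (measurableEmbedding_addRight b) g (Iic (c + b))
  rwa [preimage_add_const_Iic, add_sub_cancel_right] at h

lemma setIntegral_comp_neg (g : ℝ → E) (s : Set ℝ) : ∫ x in -s, g (-x) = ∫ x in s, g x := by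
  have h := (Measure.measurePreserving_neg volume).setIntegral_preimage_emb
    measurableEmbedding_neg g s
  rwa [neg_preimage] at h

end ChangeOfVariables

/-- The bracket of the main estimate, with `s` in place of `√ε`. -/
noncomputable def driftIntegral (a s : ℝ) : ℝ :=
  (∫ z in {z : ℝ | a * z ≤ 0}, z * exp (-(a * s * z)) * stdGaussDensity z)
    + ∫ z in {z : ℝ | 0 < a * z}, z * stdGaussDensity z

lemma driftIntegral_neg (a s : ℝ) : driftIntegral (-a) s = -driftIntegral a s := by
  have hle : {z : ℝ | -a * z ≤ 0} = -{z | a * z ≤ 0} := by ext z; simp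
  have hlt : {z : ℝ | 0 < -a * z} = -{z | 0 < a * z} := by ext z; simp
  rw [driftIntegral, driftIntegral, hle, hlt, ← setIntegral_comp_neg _ {z | a * z ≤ 0},
    ← setIntegral_comp_neg _ {z | 0 < a * z}]
  simp only [stdGaussDensity_neg, neg_mul, mul_neg, neg_neg, integral_neg]
  ring

lemma driftIntegral_of_pos {a : ℝ} (ha : 0 < a) (s : ℝ) :
    driftIntegral a s = -(a * s) * exp ((a * s) ^ 2 / 2) * stdGaussCDF (a * s) := by
  have hle : {z : ℝ | a * z ≤ 0} = Iic 0 := by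
    ext z; simpa using (mul_le_mul_iff_of_pos_left ha : a * z ≤ a * 0 ↔ _)
  have hlt : {z : ℝ | 0 < a * z} = Ioi 0 := by
    ext z; simpa using (mul_lt_mul_iff_of_pos_left ha : a * 0 < a * z ↔ _)
  set b := a * s
  have hshift : ∫ z in Iic 0, z * exp (-(b * z)) * stdGaussDensity z
      = exp (b ^ 2 / 2) * ∫ w in Iic b, (w - b) * stdGaussDensity w := by
    have h := setIntegral_Iic_comp_add_right (fun w => (w - b) * stdGaussDensity w) b 0
    rw [zero_add] at h
    rw [← h, ← integral_const_mul]
    congr with z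
    rw [add_sub_cancel_right, mul_assoc, exp_mul_stdGaussDensity]
    ring
  have hcdf : ∫ w in Iic b, (w - b) * stdGaussDensity w
      = -stdGaussDensity b - b * stdGaussCDF b := by
    simp_rw [sub_mul]
    rw [integral_sub integrable_mul_stdGaussDensity.integrableOn
      (integrable_stdGaussDensity.const_mul b).integrableOn,
      setIntegral_Iic_mul_stdGaussDensity, integral_const_mul, stdGaussCDF]
  have hpeak : stdGaussDensity 0 = exp (b ^ 2 / 2) * stdGaussDensity b := by
    simpa using exp_mul_stdGaussDensity b 0
  rw [driftIntegral, hle, hlt, hshift, hcdf, setIntegral_Ioi_mul_stdGaussDensity, hpeak]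
  ring

lemma driftIntegral_eq (a s : ℝ) :
    driftIntegral a s = -(a * s) * exp ((|a| * s) ^ 2 / 2) * stdGaussCDF (|a| * s) := by
  rcases lt_trichotomy a 0 with ha | rfl | ha
  · have h := driftIntegral_neg (-a) s
    rw [neg_neg, driftIntegral_of_pos (neg_pos.mpr ha)] at h
    rw [h, abs_of_neg ha]
    ring
  · have h := driftIntegral_neg 0 s
    rw [neg_zero] at h
    simp only [zero_mul, neg_zero]
    linarith
  · rw [driftIntegral_of_pos ha, abs_of_pos ha]

theorem gaussian_drift_integral_general (M : ℝ) :
    ∃ C > (0:ℝ), ∃ ε₀ > (0:ℝ), ∀ ε a : ℝ, 0 < ε → ε < ε₀ → |a| ≤ M →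
      |(Real.sqrt ε)⁻¹ *
          ((∫ z in {z : ℝ | a * z ≤ 0},
              z * Real.exp (-(a * Real.sqrt ε * z)) * stdGaussDensity z)
            + ∫ z in {z : ℝ | 0 < a * z}, z * stdGaussDensity z)
        + a / 2|
        ≤ C * Real.sqrt ε := by
  refine ⟨2 * M ^ 2 + 1, by positivity, (M ^ 2 + 1)⁻¹, by positivity, fun ε a hε hεlt haM => ?_⟩
  change |(√ε)⁻¹ * driftIntegral a √ε + a / 2| ≤ _
  have ha2 : a ^ 2 ≤ M ^ 2 := by nlinarith [sq_abs a, abs_nonneg a]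
  have hε1 : (M ^ 2 + 1) * ε < 1 := by
    simpa [mul_inv_cancel₀ (by positivity : M ^ 2 + 1 ≠ 0)] using
      mul_lt_mul_of_pos_left hεlt (by positivity : 0 < M ^ 2 + 1)
  set b := |a| * √ε with hb_def
  have hb0 : 0 ≤ b := by positivity
  have hb1 : |b| ≤ 1 := by
    rw [abs_le_one_iff_mul_self_le_one, hb_def]
    nlinarith [mul_self_sqrt hε.le, abs_mul_abs_self a]
  have hscale : ∀ x y : ℝ, (√ε)⁻¹ * (-(a * √ε) * x * y) + a / 2 = a * (1 / 2 - x * y) := by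
    intro x y
    field_simp
    ring
  rw [driftIntegral_eq, hscale, abs_mul]
  calc |a| * |1 / 2 - exp (b ^ 2 / 2) * stdGaussCDF b|
      ≤ |a| * (2 * |b|) := by gcongr; exact abs_half_sub_exp_mul_stdGaussCDF_le hb1
    _ = 2 * a ^ 2 * √ε := by rw [abs_of_nonneg hb0, hb_def, ← sq_abs a]; ring
    _ ≤ (2 * M ^ 2 + 1) * √ε := by gcongr; linarith

/-- Core Gaussian first-moment (drift) computation: uniformly in `|a| ≤ M`,
`ε^{−1/2}(∫_{az≤0} z e^{−a√ε z} φ₁(z) dz + ∫_{az>0} z φ₁(z) dz) = −a/2 + O(√ε)`. -/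
theorem gaussian_drift_integral (M : ℝ) (hM : 0 < M) :
    ∃ C > (0:ℝ), ∃ ε₀ > (0:ℝ), ∀ ε a : ℝ, 0 < ε → ε < ε₀ → |a| ≤ M →
      |(Real.sqrt ε)⁻¹ *
          ((∫ z in {z : ℝ | a * z ≤ 0},
              z * Real.exp (-(a * Real.sqrt ε * z)) * stdGaussDensity z)
            + ∫ z in {z : ℝ | 0 < a * z}, z * stdGaussDensity z)
        + a / 2|
        ≤ C * Real.sqrt ε :=
  gaussian_drift_integral_general M
end
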